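/- In the steady state of the self-regulating gene model, for every s ∈ ℕ: E[N^{s+1}] = (λ/μ) E[N^s 1_{A=1}] + ((μ+λ̃)/μ) E[N^s 1_{A=0}] − ∑_{j=1}^s C(s,j)(−1)^j (E[N^{s−j+1}] − E[N^{s−j} 1_{A=0}]). -/

import Mathlib

/-!
Summing the master equations over all states with at most `n` proteins telescopes to the flux
balance `λ π₁(n) + λ̃ π₀(n) = μ (n+1) π₁(n+1) + μ n π₀(n+1)` across the cut between `n` and `n+1`.
Multiplying by `n^s` and summing over `n` (an index shift) gives
`μ E[(N-1)^s (N 1_{A=1} + (N-1) 1_{A=0})] = λ E[N^s 1_{A=1}] + λ̃ E[N^s 1_{A=0}]`,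
and expanding `(N-1)^s` binomially turns this into the recursion.
-/

open Finset

lemma sum_Icc_choose_mul_neg_one_pow_mul_pow {R : Type*} [CommRing R] (x : R) (s : ℕ) :
    ∑ j ∈ Icc 1 s, (s.choose j : R) * (-1) ^ j * x ^ (s - j) = (x - 1) ^ s - x ^ s := by
  have hrange : range (s + 1) = insert 0 (Icc 1 s) := by
    ext m; simp only [mem_range, mem_insert, mem_Icc]; omega
  rw [sub_eq_neg_add x, add_pow, hrange, sum_insert (by simp)]
  simp only [pow_zero, one_mul, Nat.sub_zero, Nat.choose_zero_right, Nat.cast_one, mul_one,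
    add_sub_cancel_left]
  exact sum_congr rfl fun j _ => by ring

lemma hasSum_sub_one_pow_mul {g h : ℕ → ℝ}
    (hg : ∀ k : ℕ, Summable fun n : ℕ => (n : ℝ) ^ k * g n)
    (hh : ∀ k : ℕ, Summable fun n : ℕ => (n : ℝ) ^ k * h n) (s : ℕ) :
    HasSum (fun n : ℕ => ((n : ℝ) - 1) ^ s * ((n : ℝ) * g n - h n))
      (∑ j ∈ Icc 1 s, (s.choose j : ℝ) * (-1) ^ j
          * ((∑' n : ℕ, (n : ℝ) ^ (s - j + 1) * g n) - ∑' n : ℕ, (n : ℝ) ^ (s - j) * h n)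
        + ((∑' n : ℕ, (n : ℝ) ^ (s + 1) * g n) - ∑' n : ℕ, (n : ℝ) ^ s * h n)) := by
  have hmoment : ∀ k, HasSum (fun n : ℕ => (n : ℝ) ^ k * ((n : ℝ) * g n - h n))
      ((∑' n : ℕ, (n : ℝ) ^ (k + 1) * g n) - ∑' n : ℕ, (n : ℝ) ^ k * h n) := fun k =>
    ((hg (k + 1)).hasSum.sub (hh k).hasSum).congr_fun fun n => by ring
  refine ((hasSum_sum (f := fun j (n : ℕ) => (s.choose j : ℝ) * (-1) ^ j
      * ((n : ℝ) ^ (s - j) * ((n : ℝ) * g n - h n)))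
    fun j _ => (hmoment (s - j)).mul_left _).add (hmoment s)).congr_fun fun n => ?_
  rw [← sub_add_cancel (((n : ℝ) - 1) ^ s) ((n : ℝ) ^ s),
    ← sum_Icc_choose_mul_neg_one_pow_mul_pow, add_mul, sum_mul]
  simp only [mul_assoc]

section SelfRegulatingGene

variable {lam lamt μ θ ψ : ℝ} {π1 π0 : ℕ → ℝ}

lemma flux_balance (h00 : π0 0 = 0)
    (hboundary : π1 0 * lam = π1 1 * μ + π0 0 * θ)
    (hmaster1 : ∀ n : ℕ, 1 ≤ n →
        π1 n * (n * (ψ + μ) + lam)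
          = π1 (n - 1) * lam + π1 (n + 1) * (n + 1) * μ + π0 n * θ)
    (hmaster0 : ∀ n : ℕ, 1 ≤ n →
        π0 n * (((n : ℝ) - 1) * μ + θ + lamt)
          = π0 (n - 1) * lamt + π0 (n + 1) * n * μ + π1 n * ψ * n)
    (n : ℕ) :
    lam * π1 n + lamt * π0 n = μ * ((n : ℝ) + 1) * π1 (n + 1) + μ * n * π0 (n + 1) := by
  induction n with
  | zero =>
    rw [h00] at hboundary
    push_cast
    rw [h00]
    linarith
  | succ n ih =>
    have h1 := hmaster1 (n + 1) (by omega)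
    have h0 := hmaster0 (n + 1) (by omega)
    simp only [Nat.add_sub_cancel] at h1 h0
    push_cast at h1 h0 ⊢
    linarith

lemma tsum_sub_one_pow_mul_outflow (h00 : π0 0 = 0)
    (hflux : ∀ n : ℕ,
      lam * π1 n + lamt * π0 n = μ * ((n : ℝ) + 1) * π1 (n + 1) + μ * n * π0 (n + 1))
    (hmom1 : ∀ k : ℕ, Summable (fun n : ℕ => (n : ℝ) ^ k * π1 n))
    (hmom0 : ∀ k : ℕ, Summable (fun n : ℕ => (n : ℝ) ^ k * π0 n)) (s : ℕ) :
    μ * ∑' n : ℕ, ((n : ℝ) - 1) ^ s * (n * π1 n + ((n : ℝ) - 1) * π0 n)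
      = lam * (∑' n : ℕ, (n : ℝ) ^ s * π1 n) + lamt * ∑' n : ℕ, (n : ℝ) ^ s * π0 n := by
  have hsum : HasSum (fun n : ℕ => μ * (((n : ℝ) - 1) ^ s * (n * π1 n + ((n : ℝ) - 1) * π0 n)))
      (lam * (∑' n : ℕ, (n : ℝ) ^ s * π1 n) + lamt * ∑' n : ℕ, (n : ℝ) ^ s * π0 n) := by
    rw [← hasSum_nat_add_iff' 1, sum_range_one]
    simpa [h00] using (((hmom1 s).hasSum.mul_left lam).add
      ((hmom0 s).hasSum.mul_left lamt)).congr_fun fun n => by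
        linear_combination (-(n : ℝ) ^ s) * hflux n
  rw [← hsum.tsum_eq, tsum_mul_left]

end SelfRegulatingGene

theorem stmt13_general (lam lamt μ θ ψ : ℝ) (hμ : 0 < μ)
    (π1 π0 : ℕ → ℝ)
    (h00 : π0 0 = 0)
    (hmom1 : ∀ k : ℕ, Summable (fun n : ℕ => (n : ℝ) ^ k * π1 n))
    (hmom0 : ∀ k : ℕ, Summable (fun n : ℕ => (n : ℝ) ^ k * π0 n))
    (hboundary : π1 0 * lam = π1 1 * μ + π0 0 * θ)
    (hmaster1 : ∀ n : ℕ, 1 ≤ n →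
        π1 n * (n * (ψ + μ) + lam)
          = π1 (n - 1) * lam + π1 (n + 1) * (n + 1) * μ + π0 n * θ)
    (hmaster0 : ∀ n : ℕ, 1 ≤ n →
        π0 n * (((n : ℝ) - 1) * μ + θ + lamt)
          = π0 (n - 1) * lamt + π0 (n + 1) * n * μ + π1 n * ψ * n)
    (s : ℕ) :
    ∑' n : ℕ, (n : ℝ) ^ (s + 1) * (π1 n + π0 n)
      = (lam / μ) * (∑' n : ℕ, (n : ℝ) ^ s * π1 n)
        + ((μ + lamt) / μ) * (∑' n : ℕ, (n : ℝ) ^ s * π0 n)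
        - ∑ j ∈ Finset.Icc 1 s,
            (s.choose j : ℝ) * (-1) ^ j
              * ((∑' n : ℕ, (n : ℝ) ^ (s - j + 1) * (π1 n + π0 n))
                  - ∑' n : ℕ, (n : ℝ) ^ (s - j) * π0 n) := by
  have hmom : ∀ k : ℕ, Summable fun n : ℕ => (n : ℝ) ^ k * (π1 n + π0 n) := fun k =>
    ((hmom1 k).add (hmom0 k)).congr fun n => (mul_add _ _ _).symm
  have hout := tsum_sub_one_pow_mul_outflow h00
    (flux_balance h00 hboundary hmaster1 hmaster0) hmom1 hmom0 s
  have hexpand := (hasSum_sub_one_pow_mul hmom hmom0 s).tsum_eq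
  rw [tsum_congr (g := fun n : ℕ => ((n : ℝ) - 1) ^ s * (n * π1 n + ((n : ℝ) - 1) * π0 n))
    fun n => by ring] at hexpand
  field_simp
  linear_combination hout - μ * hexpand

/-- Moment recursion for the total protein number: for every `s`,
`E[N^{s+1}] = (λ/μ) E[N^s 1_{A=1}] + ((μ+λ̃)/μ) E[N^s 1_{A=0}]
  − ∑_{j=1}^s C(s,j)(−1)^j (E[N^{s−j+1}] − E[N^{s−j} 1_{A=0}])`. -/
theorem stmt13 (lam lamt μ θ ψ : ℝ) (hlam : 0 < lam) (hμ : 0 < μ) (hθ : 0 < θ)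
    (hψ : 0 < ψ) (hlamt : 0 ≤ lamt)
    (π1 π0 : ℕ → ℝ)
    (hnonneg : ∀ n, 0 ≤ π1 n ∧ 0 ≤ π0 n)
    (h00 : π0 0 = 0)
    (htotal : (∑' n, π1 n) + (∑' n, π0 n) = 1)
    (hmom1 : ∀ k : ℕ, Summable (fun n : ℕ => (n : ℝ) ^ k * π1 n))
    (hmom0 : ∀ k : ℕ, Summable (fun n : ℕ => (n : ℝ) ^ k * π0 n))
    (hboundary : π1 0 * lam = π1 1 * μ + π0 0 * θ)
    (hmaster1 : ∀ n : ℕ, 1 ≤ n →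
        π1 n * (n * (ψ + μ) + lam)
          = π1 (n - 1) * lam + π1 (n + 1) * (n + 1) * μ + π0 n * θ)
    (hmaster0 : ∀ n : ℕ, 1 ≤ n →
        π0 n * (((n : ℝ) - 1) * μ + θ + lamt)
          = π0 (n - 1) * lamt + π0 (n + 1) * n * μ + π1 n * ψ * n)
    (s : ℕ) :
    ∑' n : ℕ, (n : ℝ) ^ (s + 1) * (π1 n + π0 n)
      = (lam / μ) * (∑' n : ℕ, (n : ℝ) ^ s * π1 n)
        + ((μ + lamt) / μ) * (∑' n : ℕ, (n : ℝ) ^ s * π0 n)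
        - ∑ j ∈ Finset.Icc 1 s,
            (s.choose j : ℝ) * (-1) ^ j
              * ((∑' n : ℕ, (n : ℝ) ^ (s - j + 1) * (π1 n + π0 n))
                  - ∑' n : ℕ, (n : ℝ) ^ (s - j) * π0 n) :=
  stmt13_general lam lamt μ θ ψ hμ π1 π0 h00 hmom1 hmom0 hboundary hmaster1 hmaster0 s
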